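/- Let x ∈ (0,1) and let λ ∈ ℝ satisfy x = e^{−e^λ}(e^λ + 1). Then λ − log(−log x) ≤ log(2/3) + log( 1 + √( 1 − 9/(2 log x) ) ). -/

import Mathlib

/-!
With `u = e^λ` and `L = -log x` the hypothesis reads `L = u - log (1 + u)`. The Padé bound
`log (1 + u) ≤ (u² + 6u) / (4u + 6)` turns this into the quadratic inequality
`3u² ≤ 4Lu + 6L`, so `u` is at most the positive root `(2/3) L (1 + √(1 + 9/(2L)))`;
taking logarithms gives the claim.
-/

open Real

theorem Real.log_one_add_le_pade {u : ℝ} (hu : 0 ≤ u) :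
    log (1 + u) ≤ (u ^ 2 + 6 * u) / (4 * u + 6) := by
  let f : ℝ → ℝ := fun v ↦ (v ^ 2 + 6 * v) / (4 * v + 6) - log (1 + v)
  let f' : ℝ → ℝ := fun v ↦ 4 * v ^ 3 / ((4 * v + 6) ^ 2 * (1 + v))
  have hf : ∀ v, 0 ≤ v → HasDerivAt f (f' v) v := by
    intro v hv
    have h4 : 4 * v + 6 ≠ 0 := by positivity
    have h1 : 1 + v ≠ 0 := by positivity
    have hpoly : HasDerivAt (fun v : ℝ ↦ v ^ 2 + 6 * v) (2 * v + 6) v := by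
      simpa using (hasDerivAt_pow 2 v).fun_add ((hasDerivAt_id v).const_mul 6)
    have hden : HasDerivAt (fun v : ℝ ↦ 4 * v + 6) 4 v := by
      simpa using ((hasDerivAt_id v).const_mul 4).add_const 6
    have hlog : HasDerivAt (fun v : ℝ ↦ log (1 + v)) (1 / (1 + v)) v := by
      simpa using ((hasDerivAt_id v).const_add 1).log h1
    refine ((hpoly.div hden h4).fun_sub hlog).congr_deriv ?_
    simp only [f']
    field_simp
    ring
  have hmono : MonotoneOn f (Set.Ici 0) := by
    refine monotoneOn_of_hasDerivWithinAt_nonneg (f' := f') (convex_Ici 0)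
      (fun v hv ↦ (hf v hv).continuousAt.continuousWithinAt) (fun v hv ↦ ?_) (fun v hv ↦ ?_)
    all_goals rw [interior_Ici] at hv
    · exact (hf v (le_of_lt hv)).hasDerivWithinAt
    · have : 0 < v := hv
      positivity
  simpa [f] using hmono Set.self_mem_Ici hu hu

theorem le_quadratic_root_of_mul_sq_le {a b c u : ℝ} (ha : 0 < a) (h : a * u ^ 2 ≤ b * u + c) :
    u ≤ (b + √(b ^ 2 + 4 * a * c)) / (2 * a) := by
  have hsq : (2 * a * u - b) ^ 2 ≤ b ^ 2 + 4 * a * c := by nlinarith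
  rw [le_div_iff₀ (by positivity)]
  linarith [(le_abs_self _).trans (abs_le_sqrt hsq)]

theorem le_two_thirds_mul_one_add_sqrt {u L : ℝ} (hL : 0 < L)
    (h : 3 * u ^ 2 ≤ 4 * L * u + 6 * L) :
    u ≤ 2 / 3 * (1 + √(1 + 9 / (2 * L))) * L := by
  have hsqrt : √((4 * L) ^ 2 + 4 * 3 * (6 * L)) = 4 * L * √(1 + 9 / (2 * L)) := by
    rw [show (4 * L) ^ 2 + 4 * 3 * (6 * L) = (4 * L) ^ 2 * (1 + 9 / (2 * L)) by field_simp; ring,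
      sqrt_mul (by positivity), sqrt_sq (by positivity)]
  have := le_quadratic_root_of_mul_sq_le (by norm_num) h
  rw [hsqrt] at this
  linarith

theorem solution_upper (x lam : ℝ) (hx : x ∈ Set.Ioo (0:ℝ) 1)
    (h : x = Real.exp (-(Real.exp lam)) * (Real.exp lam + 1)) :
    lam - Real.log (-Real.log x)
      ≤ Real.log (2/3) + Real.log (1 + Real.sqrt (1 - 9 / (2 * Real.log x))) := by
  set u := exp lam
  set L := -log x
  have hLpos : 0 < L := neg_pos.mpr (log_neg hx.1 hx.2)
  have hLu : L = u - log (1 + u) := by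
    simp only [L]
    rw [h, log_mul (by positivity) (by positivity), log_exp, add_comm u 1]
    ring
  have hquad : 3 * u ^ 2 ≤ 4 * L * u + 6 * L := by
    have hpade := log_one_add_le_pade (exp_pos lam).le
    rw [le_div_iff₀ (by positivity)] at hpade
    nlinarith
  have hu := le_two_thirds_mul_one_add_sqrt hLpos hquad
  rw [show 1 - 9 / (2 * log x) = 1 + 9 / (2 * L) by ring]
  have hs : 0 < 1 + √(1 + 9 / (2 * L)) := by positivity
  rw [← log_mul (by norm_num) hs.ne', sub_le_iff_le_add, ← log_mul (by positivity) hLpos.ne',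
    le_log_iff_exp_le (by positivity)]
  exact hu
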